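/- arXiv:2210.14503 — 6 statements merged into one kernel-verified Lean document; each statement's English description precedes it below -/
import Mathlib

section
/- For real $t \ge 0$ and real exponent $p \ge 3$, one has $(1+t)^p \ge 1 + pt + pt^{p-1} + t^p$. -/
/-!
Write `G a s = (1 + s) ^ a - s ^ a - a * s ^ (a - 1)` (`binomialGap`). Its derivative in `s`
is `a * G (a - 1) s`, so lower bounds on `G (a - 1)` integrate to lower bounds on `G a`.
Bernoulli's inequality, applied to `(1 + s) ^ a = s ^ a * (1 + 1 / s) ^ a`, gives `G a ≥ 0` for
`a ≥ 1`; integrating once gives `G a ≥ 1` for `a ≥ 2`, and once more `G p s ≥ 1 + p * s` for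
`p ≥ 3`, which is the theorem.
-/

open Real Set

noncomputable def binomialGap (a s : ℝ) : ℝ := (1 + s) ^ a - s ^ a - a * s ^ (a - 1)

lemma monotoneOn_Ici_zero_of_hasDerivAt {f f' : ℝ → ℝ} (hf : ContinuousOn f (Ici 0))
    (hf' : ∀ x > 0, HasDerivAt f (f' x) x) (hpos : ∀ x > 0, 0 ≤ f' x) :
    MonotoneOn f (Ici 0) := by
  refine monotoneOn_of_hasDerivWithinAt_nonneg (convex_Ici 0) hf (fun x hx => ?_)
    (fun x hx => hpos x (by rwa [interior_Ici] at hx))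
  rw [interior_Ici] at hx ⊢
  exact (hf' x hx).hasDerivWithinAt

lemma continuous_binomialGap {a : ℝ} (ha : 1 ≤ a) : Continuous (binomialGap a) := by
  unfold binomialGap
  fun_prop (disch := linarith)

lemma hasDerivAt_binomialGap (a : ℝ) {s : ℝ} (hs : 0 < s) :
    HasDerivAt (binomialGap a) (a * binomialGap (a - 1) s) s := by
  have h := ((((hasDerivAt_id' s).const_add 1).rpow_const (p := a) (Or.inl (by linarith))).sub
    ((hasDerivAt_id' s).rpow_const (p := a) (Or.inl hs.ne'))).sub
    (((hasDerivAt_id' s).rpow_const (p := a - 1) (Or.inl hs.ne')).const_mul a)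
  refine h.congr_deriv ?_
  simp only [binomialGap]
  ring

lemma binomialGap_zero {a : ℝ} (ha : 1 < a) : binomialGap a 0 = 1 := by
  simp [binomialGap, zero_rpow (by linarith : a ≠ 0), zero_rpow (by linarith : a - 1 ≠ 0)]

lemma binomialGap_nonneg {a s : ℝ} (ha : 1 ≤ a) (hs : 0 ≤ s) : 0 ≤ binomialGap a s := by
  rcases hs.eq_or_lt with rfl | hs
  · rcases ha.eq_or_lt with rfl | ha
    · simp [binomialGap]
    · rw [binomialGap_zero ha]; exact zero_le_one
  have hscale : (1 + s) ^ a = s ^ a * (1 + 1 / s) ^ a := by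
    rw [← mul_rpow hs.le (by positivity)]
    congr 1
    field_simp
    ring
  have hlead : s ^ a + a * s ^ (a - 1) = s ^ a * (1 + a * (1 / s)) := by
    rw [rpow_sub hs, rpow_one]
    field_simp
  have hbernoulli :=
    one_add_mul_self_le_rpow_one_add (by linarith [one_div_pos.mpr hs] : (-1 : ℝ) ≤ 1 / s) ha
  have := mul_le_mul_of_nonneg_left hbernoulli (by positivity : 0 ≤ s ^ a)
  rw [binomialGap, hscale]
  linarith

lemma one_le_binomialGap {a s : ℝ} (ha : 2 ≤ a) (hs : 0 ≤ s) : 1 ≤ binomialGap a s := by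
  have hmono := monotoneOn_Ici_zero_of_hasDerivAt
    (continuous_binomialGap (by linarith)).continuousOn
    (fun x hx => hasDerivAt_binomialGap a hx)
    (fun x hx => mul_nonneg (by linarith) (binomialGap_nonneg (by linarith) hx.le))
  simpa [binomialGap_zero (by linarith : 1 < a)] using hmono self_mem_Ici hs hs

lemma one_add_mul_le_binomialGap {a s : ℝ} (ha : 3 ≤ a) (hs : 0 ≤ s) :
    1 + a * s ≤ binomialGap a s := by
  have hmono := monotoneOn_Ici_zero_of_hasDerivAt
    ((continuous_binomialGap (by linarith)).sub (continuous_const_mul a)).continuousOn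
    (fun x hx => (hasDerivAt_binomialGap a hx).sub ((hasDerivAt_id x).const_mul a))
    (fun x hx => by nlinarith [one_le_binomialGap (by linarith : 2 ≤ a - 1) hx.le])
  have h := hmono self_mem_Ici hs hs
  simp only [Pi.sub_apply, binomialGap_zero (by linarith : 1 < a), mul_zero, sub_zero] at h
  linarith

/-- For real `t ≥ 0` and real exponent `p ≥ 3`, `(1+t)^p ≥ 1 + p t + p t^{p-1} + t^p`. -/
theorem stmt2 (t p : ℝ) (ht : 0 ≤ t) (hp : 3 ≤ p) :
    (1 + t) ^ p ≥ 1 + p * t + p * t ^ (p - 1) + t ^ p := by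
  have h := one_add_mul_le_binomialGap hp ht
  rw [binomialGap] at h
  linarith
end

section
/- For real $t \ge 0$ and real exponent $p \ge 2$, one has $(1+t)^p \ge 1 + pt^{p-1} + t^p$. -/
/-- For real `t ≥ 0` and real exponent `p ≥ 2`, `(1+t)^p ≥ 1 + p t^{p-1} + t^p`. -/
theorem stmt3 (t p : ℝ) (ht : 0 ≤ t) (hp : 2 ≤ p) :
    (1 + t) ^ p ≥ 1 + p * t ^ (p - 1) + t ^ p := by
  rcases eq_or_lt_of_le ht with h0 | h0
  · rw [← h0]
    simp [Real.zero_rpow (by linarith : p - 1 ≠ 0),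
      Real.zero_rpow (by linarith : p ≠ 0)]
  have h1t : (0:ℝ) < 1 + t := by linarith
  have hp1 : (1:ℝ) ≤ p - 1 := by linarith
  have hsplit : (1 + t) ^ p = (1 + t) ^ (p - 1) * (1 + t) := by
    have h := Real.rpow_add h1t (p - 1) 1
    rw [Real.rpow_one] at h
    rw [← h]; ring_nf
  rcases le_total t 1 with hle | hle
  · -- 0 < t ≤ 1
    have hb : 1 + (p - 1) * t ≤ (1 + t) ^ (p - 1) :=
      one_add_mul_self_le_rpow_one_add (by linarith) hp1
    have h2 : t ^ (p - 1) ≤ t := by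
      calc t ^ (p - 1) ≤ t ^ (1:ℝ) :=
            Real.rpow_le_rpow_of_exponent_ge h0 hle hp1
        _ = t := Real.rpow_one t
    have h3 : t ^ p ≤ t * t := by
      have e : t ^ (2:ℝ) = t * t := by
        have h := Real.rpow_add h0 1 1
        rw [Real.rpow_one] at h
        rw [show (2:ℝ) = 1 + 1 by norm_num, h]
      calc t ^ p ≤ t ^ (2:ℝ) :=
            Real.rpow_le_rpow_of_exponent_ge h0 hle hp
        _ = t * t := e
    have hstep : (1 + (p - 1) * t) * (1 + t) ≤ (1 + t) ^ (p - 1) * (1 + t) :=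
      mul_le_mul_of_nonneg_right hb h1t.le
    rw [ge_iff_le, hsplit]
    nlinarith [h2, h3, mul_nonneg (by linarith : (0:ℝ) ≤ p) (sub_nonneg.2 h2),
      mul_nonneg (by linarith : (0:ℝ) ≤ p - 2) (mul_nonneg h0.le h0.le)]
  · -- t ≥ 1
    have hb : 1 + (p - 1) * (1 / t) ≤ (1 + 1 / t) ^ (p - 1) :=
      one_add_mul_self_le_rpow_one_add (by linarith [one_div_pos.2 h0]) hp1
    have hfac : (1 + t) ^ (p - 1) = t ^ (p - 1) * (1 + 1 / t) ^ (p - 1) := by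
      rw [← Real.mul_rpow h0.le (by positivity)]
      congr 1
      field_simp
      ring
    have hmul : t ^ (p - 2) * t = t ^ (p - 1) := by
      have h := Real.rpow_add h0 (p - 2) 1
      rw [Real.rpow_one] at h
      rw [← h]; ring_nf
    have htp : t ^ (p - 1) * t = t ^ p := by
      have h := Real.rpow_add h0 (p - 1) 1
      rw [Real.rpow_one] at h
      rw [← h]; ring_nf
    have h1le : (1:ℝ) ≤ t ^ (p - 2) := by
      calc (1:ℝ) = t ^ (0:ℝ) := (Real.rpow_zero t).symm
        _ ≤ t ^ (p - 2) := Real.rpow_le_rpow_of_exponent_le hle (by linarith)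
    have hpos : (0:ℝ) < t ^ (p - 1) := Real.rpow_pos_of_pos h0 _
    have hlow : t ^ (p - 1) + (p - 1) * t ^ (p - 2) ≤ (1 + t) ^ (p - 1) := by
      rw [hfac]
      have hh := mul_le_mul_of_nonneg_left hb hpos.le
      calc t ^ (p - 1) + (p - 1) * t ^ (p - 2)
          = t ^ (p - 1) * (1 + (p - 1) * (1 / t)) := by
            rw [← hmul]; field_simp
        _ ≤ t ^ (p - 1) * (1 + 1 / t) ^ (p - 1) := hh
    have hstep : (t ^ (p - 1) + (p - 1) * t ^ (p - 2)) * (1 + t)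
        ≤ (1 + t) ^ (p - 1) * (1 + t) := mul_le_mul_of_nonneg_right hlow h1t.le
    rw [ge_iff_le, hsplit]
    nlinarith [hstep, hmul, htp, h1le, hpos]
end

section
/- (Energy-Pohozaev inequality for the mixed critical functional) For $N \ge 3$, $c > 0$, $\mu > 0$, $2 + \frac{4}{N} \le q < 2^*$, every $u \in H^1(\mathbb{R}^N)$ with $\|u\|_2^2 = c$, and every $t > 0$: $\Phi_\mu(u) \ge \Phi_\mu(t^{N/2} u(t\cdot)) + \frac{1-t^2}{2}\mathcal{P}_\mu(u) + h(t)\|u\|_{2^*}^{2^*}$, where $h(t) = \frac{1-t^2}{2} - \frac{1-t^{2^*}}{2^*}$. -/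
open MeasureTheory

/-- Energy–Pohozaev inequality for the mixed Sobolev-critical functional: for
`u ∈ S_c`, `t > 0`, with `u_t = t^{N/2} u(t·)` and the standard scaling identities,
`Φ_μ(u) ≥ Φ_μ(t^{N/2}u_t) + ((1-t²)/2) P_μ(u) + h(t) ‖u‖_{2^*}^{2^*}`,
where `h(t) = (1-t²)/2 - (1-t^{2^*})/2^*`. -/
theorem stmt12 (N : ℕ) (hN : 3 ≤ N) (q μ c t p γq : ℝ)
    (hp : p = 2 * (N : ℝ) / ((N : ℝ) - 2)) (hγ : γq = (N : ℝ) * (q - 2) / (2 * q))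
    (hq1 : 2 + 4 / (N : ℝ) ≤ q) (hq2 : q < p)
    (hμ : 0 < μ) (hc : 0 < c) (ht : 0 < t)
    (u ut : EuclideanSpace ℝ (Fin N) → ℝ)
    (hut : ∀ x, ut x = t ^ ((N : ℝ) / 2) * u (t • x))
    (hmass : (∫ x, (u x) ^ 2) = c)
    (A B C : ℝ)
    (hA : A = ∫ x, ‖gradient u x‖ ^ 2)
    (hB : B = ∫ x, |u x| ^ p)
    (hC : C = ∫ x, |u x| ^ q)
    -- the scaling identities for the dilation `ut`
    (hsA : (∫ x, ‖gradient ut x‖ ^ 2) = t ^ 2 * A)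
    (hsB : (∫ x, |ut x| ^ p) = t ^ p * B)
    (hsC : (∫ x, |ut x| ^ q) = t ^ (q * γq) * C)
    (hsm : (∫ x, (ut x) ^ 2) = c) :
    (1 / 2) * A - (1 / p) * B - (μ / q) * C ≥
      ((1 / 2) * (∫ x, ‖gradient ut x‖ ^ 2) - (1 / p) * (∫ x, |ut x| ^ p)
        - (μ / q) * (∫ x, |ut x| ^ q))
      + ((1 - t ^ 2) / 2) * (A - B - μ * γq * C)
      + ((1 - t ^ 2) / 2 - (1 - t ^ p) / p) * B := by
  rw [hsA, hsB, hsC]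
  have hN0 : (0:ℝ) < N := by positivity
  have hq0 : (0:ℝ) < q := by nlinarith [div_nonneg (by norm_num : (0:ℝ) ≤ 4) hN0.le]
  have hC0 : 0 ≤ C := by
    rw [hC]; exact integral_nonneg fun x => Real.rpow_nonneg (abs_nonneg _) q
  have ha : 2 ≤ q * γq := by
    have : q * γq = (N : ℝ) * (q - 2) / 2 := by
      rw [hγ]; field_simp
    rw [this]
    have h4 : 4 / (N:ℝ) ≤ q - 2 := by linarith
    have h5 := (div_le_iff₀ hN0).mp h4
    nlinarith
  -- Bernoulli: 1 + (q*γq/2)*(t^2-1) ≤ (t^2)^(q*γq/2) = t^(q*γq)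
  have hbern : 1 + (q * γq / 2) * (t ^ 2 - 1) ≤ t ^ (q * γq) := by
    have h1 : (1 : ℝ) + (t ^ 2 - 1) = t ^ 2 := by ring
    have h2 : (-1 : ℝ) ≤ t ^ 2 - 1 := by nlinarith
    have h3 : (1 : ℝ) ≤ q * γq / 2 := by linarith
    have := one_add_mul_self_le_rpow_one_add h2 h3
    rw [h1] at this
    calc 1 + (q * γq / 2) * (t ^ 2 - 1) ≤ (t ^ 2) ^ (q * γq / 2) := this
      _ = t ^ (q * γq) := by
          rw [← Real.rpow_natCast t 2, ← Real.rpow_mul ht.le]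
          congr 1
          ring
  have key : μ / q * C + μ * γq * C * (t ^ 2 - 1) / 2 ≤ μ / q * C * t ^ (q * γq) := by
    have hmc : 0 ≤ μ / q * C := by positivity
    have := mul_le_mul_of_nonneg_left hbern hmc
    calc μ / q * C + μ * γq * C * (t ^ 2 - 1) / 2
        = μ / q * C * (1 + (q * γq / 2) * (t ^ 2 - 1)) := by field_simp
      _ ≤ μ / q * C * t ^ (q * γq) := this
  rw [ge_iff_le, ← sub_nonneg]
  have hid : (1 / 2) * A - (1 / p) * B - (μ / q) * C -
      ((1 / 2) * (t ^ 2 * A) - (1 / p) * (t ^ p * B) - (μ / q) * (t ^ (q * γq) * C)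
        + ((1 - t ^ 2) / 2) * (A - B - μ * γq * C)
        + ((1 - t ^ 2) / 2 - (1 - t ^ p) / p) * B)
      = μ / q * C * t ^ (q * γq) - (μ / q * C + μ * γq * C * (t ^ 2 - 1) / 2) := by
    ring
  rw [hid]
  linarith [key]
end

section
/- (Uniqueness of projection onto the Pohozaev manifold) For $N \ge 3$, $\mu > 0$, $2 + \frac{4}{N} < q < 2^*$ and any $u \in H^1(\mathbb{R}^N)$ with $u \ne 0$, there exists a unique $t_u > 0$ such that the fiber map $t \mapsto \Phi_\mu(t^{N/2}u(t\cdot)) = \frac{t^2}{2}A - \frac{t^{2^*}}{2^*}B - \frac{\mu t^{q\gamma_q}}{q}C$ (with $A = \|\nabla u\|_2^2 > 0$, $B = \|u\|_{2^*}^{2^*} > 0$, $C = \|u\|_q^q > 0$) has derivative zero at $t = t_u$; equivalently $t_u^{N/2}u(t_u \cdot) \in \mathcal{M}_\mu(c)$ where $c = \|u\|_2^2$. -/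
/-!
Differentiating the fiber map gives `g'(t) = t (A - h(t))` with
`h(t) = B t^(2^* - 2) + (μ qγ_q C / q) t^(qγ_q - 2)`. Both exponents of `h` are positive, so `h`
increases strictly from `h(0) = 0` to `∞`: it takes the value `A` exactly once, at `t_u`, and `g`
increases on `(0, t_u]` and decreases on `[t_u, ∞)`.
-/

open Real Set

section RpowSum

variable {a b B D : ℝ}

lemma strictMonoOn_rpow_add_rpow (ha : 0 < a) (hb : 0 < b) (hB : 0 < B) (hD : 0 ≤ D) :
    StrictMonoOn (fun t : ℝ => B * t ^ a + D * t ^ b) (Ici 0) := by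
  intro x hx y _ hxy
  have hxa : x ^ a < y ^ a := rpow_lt_rpow hx hxy ha
  have hxb : x ^ b ≤ y ^ b := (rpow_lt_rpow hx hxy hb).le
  exact add_lt_add_of_lt_of_le (mul_lt_mul_of_pos_left hxa hB) (mul_le_mul_of_nonneg_left hxb hD)

lemma exists_pos_rpow_add_rpow_eq (ha : 0 < a) (hb : 0 < b) (hB : 0 < B) (hD : 0 ≤ D)
    {A : ℝ} (hA : 0 < A) : ∃ t, 0 < t ∧ B * t ^ a + D * t ^ b = A := by
  set h : ℝ → ℝ := fun t => B * t ^ a + D * t ^ b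
  have h_zero : h 0 = 0 := by simp [h, zero_rpow ha.ne', zero_rpow hb.ne']
  set T := (A / B) ^ a⁻¹
  have hT : 0 ≤ T := by positivity
  have hA_le : A ≤ h T := by
    have hBT : B * T ^ a = A := by
      rw [rpow_inv_rpow (by positivity) ha.ne']; field_simp
    have : 0 ≤ D * T ^ b := by positivity
    simp only [h]; linarith
  have hcont : Continuous h := by
    have := continuous_rpow_const ha.le
    have := continuous_rpow_const hb.le
    fun_prop
  obtain ⟨t, ⟨ht0, -⟩, ht⟩ :=
    intermediate_value_Icc hT hcont.continuousOn ⟨h_zero.le.trans hA.le, hA_le⟩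
  refine ⟨t, lt_of_le_of_ne ht0 ?_, ht⟩
  rintro rfl
  exact hA.ne (h_zero ▸ ht)

end RpowSum

lemma isMaxOn_of_hasDerivAt_nonneg_nonpos {g g' : ℝ → ℝ} {a t : ℝ} (ht : a < t)
    (hg : ∀ x, a < x → HasDerivAt g (g' x) x) (hpos : ∀ x, a < x → x < t → 0 ≤ g' x)
    (hneg : ∀ x, t < x → g' x ≤ 0) : IsMaxOn g (Ioi a) t := by
  have hcont : ContinuousOn g (Ioi a) := fun x hx => (hg x hx).continuousAt.continuousWithinAt
  have hmono : MonotoneOn g (Ioc a t) := by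
    refine monotoneOn_of_hasDerivWithinAt_nonneg (f' := g') (convex_Ioc a t)
      (hcont.mono Ioc_subset_Ioi_self) (fun x hx => ?_) (fun x hx => ?_) <;>
      rw [interior_Ioc] at hx
    · exact (hg x hx.1).hasDerivWithinAt
    · exact hpos x hx.1 hx.2
  have hanti : AntitoneOn g (Ici t) := by
    refine antitoneOn_of_hasDerivWithinAt_nonpos (f' := g') (convex_Ici t)
      (hcont.mono (Ici_subset_Ioi.mpr ht)) (fun x hx => ?_) (fun x hx => ?_) <;>
      rw [interior_Ici] at hx
    · exact (hg x (ht.trans hx)).hasDerivWithinAt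
    · exact hneg x hx
  intro s hs
  rcases le_total s t with hst | hts
  · exact hmono ⟨hs, hst⟩ ⟨ht, le_rfl⟩ hst
  · exact hanti self_mem_Ici hts hts

section CriticalPoint

variable {g h : ℝ → ℝ} {A t : ℝ}

lemma deriv_eq_zero_iff_of_hasDerivAt_mul_sub (hg : ∀ x, 0 < x → HasDerivAt g (x * (A - h x)) x)
    (ht : 0 < t) : deriv g t = 0 ↔ h t = A := by
  rw [(hg t ht).deriv, mul_eq_zero, sub_eq_zero, or_iff_right ht.ne', eq_comm]

lemma isMaxOn_of_hasDerivAt_mul_sub (hg : ∀ x, 0 < x → HasDerivAt g (x * (A - h x)) x)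
    (hh : StrictMonoOn h (Ioi 0)) (ht : 0 < t) (hroot : h t = A) : IsMaxOn g (Ioi 0) t := by
  refine isMaxOn_of_hasDerivAt_nonneg_nonpos ht hg (fun x hx hxt => ?_) (fun x hxt => ?_)
  · have : h x < A := hroot ▸ hh hx ht hxt
    exact mul_nonneg hx.le (by linarith)
  · have hx : 0 < x := ht.trans hxt
    have : A < h x := hroot ▸ hh ht hx hxt
    exact mul_nonpos_of_nonneg_of_nonpos hx.le (by linarith)

end CriticalPoint

lemma hasDerivAt_fiberMap {p Q q μ A B C t : ℝ} (hp : p ≠ 0) (ht : 0 < t) :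
    HasDerivAt (fun t : ℝ => t ^ 2 / 2 * A - t ^ p / p * B - μ * t ^ Q / q * C)
      (t * (A - (B * t ^ (p - 2) + μ * Q * C / q * t ^ (Q - 2)))) t := by
  have h2 := ((hasDerivAt_pow 2 t).div_const 2).mul_const A
  have hp' := ((hasDerivAt_rpow_const (p := p) (Or.inl ht.ne')).div_const p).mul_const B
  have hQ := (((hasDerivAt_rpow_const (p := Q) (Or.inl ht.ne')).const_mul μ).div_const q).mul_const C
  refine ((h2.sub hp').sub hQ).congr_deriv ?_
  have hpow (r : ℝ) : t ^ (r - 1) = t * t ^ (r - 2) := by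
    rw [show r - 1 = r - 2 + 1 by ring, rpow_add_one ht.ne', mul_comm]
  rw [hpow, hpow]
  field_simp
  ring

lemma two_lt_mul_gamma {N q : ℝ} (hN : 0 < N) (hq : 2 + 4 / N < q) :
    2 < q * (N * (q - 2) / (2 * q)) := by
  have hq0 : 0 < q := by linarith [div_pos four_pos hN]
  rw [show q * (N * (q - 2) / (2 * q)) = N * (q - 2) / 2 by field_simp, lt_div_iff₀ two_pos]
  have := (div_lt_iff₀ hN).mp (by linarith : 4 / N < q - 2)
  linarith

lemma mul_gamma_lt_two_star {N q : ℝ} (hN : 2 < N) (hq0 : 0 < q) (hq : q < 2 * N / (N - 2)) :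
    q * (N * (q - 2) / (2 * q)) < 2 * N / (N - 2) := by
  have hN2 : 0 < N - 2 := by linarith
  rw [show q * (N * (q - 2) / (2 * q)) = N * (q - 2) / 2 by field_simp,
    div_lt_div_iff₀ two_pos hN2]
  rw [lt_div_iff₀ hN2] at hq
  nlinarith

/-- Uniqueness of the projection onto the Pohozaev manifold: for `A, B, C > 0`,
`μ > 0` and exponents `2 < qγ_q < 2^*`, the fiber map
`g(t) = (t²/2)A - (t^{2^*}/2^*)B - (μ t^{qγ_q}/q)C` has a unique critical point
`t_u > 0`, which is its global maximum on `(0,∞)`. -/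
theorem stmt14 (N : ℕ) (hN : 3 ≤ N) (q μ A B C p γq : ℝ)
    (hp : p = 2 * (N : ℝ) / ((N : ℝ) - 2)) (hγ : γq = (N : ℝ) * (q - 2) / (2 * q))
    (hq1 : 2 + 4 / (N : ℝ) < q) (hq2 : q < p)
    (hμ : 0 < μ) (hA : 0 < A) (hB : 0 < B) (hC : 0 < C)
    (g : ℝ → ℝ)
    (hg : ∀ t : ℝ, g t = t ^ 2 / 2 * A - t ^ p / p * B - μ * t ^ (q * γq) / q * C) :
    (∃! tu : ℝ, 0 < tu ∧ deriv g tu = 0) ∧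
    ∀ tu : ℝ, 0 < tu → deriv g tu = 0 → ∀ s : ℝ, 0 < s → g s ≤ g tu := by
  have hN2 : (2 : ℝ) < N := by exact_mod_cast hN
  have hQ2 : 2 < q * γq := hγ ▸ two_lt_mul_gamma (by linarith) hq1
  have hq0 : 0 < q := by linarith [div_pos four_pos (by linarith : (0 : ℝ) < N)]
  have hQp : q * γq < p := hp ▸ hγ ▸ mul_gamma_lt_two_star hN2 hq0 (hp ▸ hq2)
  set h : ℝ → ℝ := fun t => B * t ^ (p - 2) + μ * (q * γq) * C / q * t ^ (q * γq - 2)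
  have hD : 0 ≤ μ * (q * γq) * C / q := by have := hQ2.le; positivity
  have hderiv : ∀ t, 0 < t → HasDerivAt g (t * (A - h t)) t := fun t ht =>
    funext hg ▸ hasDerivAt_fiberMap (by linarith) ht
  have hmono : StrictMonoOn h (Ioi 0) :=
    (strictMonoOn_rpow_add_rpow (by linarith) (by linarith) hB hD).mono Ioi_subset_Ici_self
  obtain ⟨tu, htu, hroot⟩ :=
    exists_pos_rpow_add_rpow_eq (a := p - 2) (b := q * γq - 2) (by linarith) (by linarith) hB hD hA
  have hcrit : ∀ {t}, 0 < t → (deriv g t = 0 ↔ h t = A) :=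
    deriv_eq_zero_iff_of_hasDerivAt_mul_sub hderiv
  refine ⟨⟨tu, ⟨htu, (hcrit htu).2 hroot⟩, fun s ⟨hs, hs'⟩ => ?_⟩, ?_⟩
  · exact hmono.injOn hs htu (((hcrit hs).1 hs').trans hroot.symm)
  · exact fun t ht ht' s hs => isMaxOn_of_hasDerivAt_mul_sub hderiv hmono ht ((hcrit ht).1 ht') hs
end

section
/- (Asymptotics of the mass of the truncated Aubin–Talenti bubble) Let $N \ge 3$, $A_N = [N(N-2)]^{(N-2)/4}$, and define $\Theta_n(r) = A_N (\frac{n}{1+n^2r^2})^{(N-2)/2}$ for $0 \le r < 1$, $\Theta_n(r) = A_N(\frac{n}{1+n^2})^{(N-2)/2}(2-r)$ for $1 \le r < 2$, and $\Theta_n(r) = 0$ for $r \ge 2$, and $U_n(x) = \Theta_n(|x|)$. Then $\|U_n\|_{L^2(\mathbb{R}^N)}^2 = O(\xi(n)/n^2)$ as $n \to \infty$, where $\xi(n) = \int_0^n \frac{s^{N-1}}{(1+s^2)^{N-2}}\,ds$ satisfies $\xi(n) = O(n)$ if $N = 3$, $\xi(n) = O(\log(1+n^2))$ if $N = 4$,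 and $\xi(n) = O(1)$ if $N \ge 5$. -/
open MeasureTheory Filter Asymptotics

/-- `A_N = [N(N-2)]^{(N-2)/4}`. -/
noncomputable def AN (N : ℕ) : ℝ := ((N : ℝ) * ((N : ℝ) - 2)) ^ (((N : ℝ) - 2) / 4)

/-- Radial profile of the truncated Aubin–Talenti bubble `U_n`. -/
noncomputable def Θ (N : ℕ) (n : ℕ) (r : ℝ) : ℝ :=
  if r < 1 then AN N * ((n : ℝ) / (1 + (n : ℝ) ^ 2 * r ^ 2)) ^ (((N : ℝ) - 2) / 2)
  else if r < 2 then AN N * ((n : ℝ) / (1 + (n : ℝ) ^ 2)) ^ (((N : ℝ) - 2) / 2) * (2 - r)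
  else 0

/-- `ξ(n) = ∫₀ⁿ s^{N-1}/(1+s²)^{N-2} ds`. -/
noncomputable def ξ (N : ℕ) (n : ℕ) : ℝ :=
  ∫ s in (0 : ℝ)..(n : ℝ), s ^ (N - 1) / (1 + s ^ 2) ^ (N - 2)

/-!
In polar coordinates `‖U_n‖₂²` is a multiple of `∫₀^∞ r^{N-1} Θ_n(r)² dr`. On `[0, 1]` the
substitution `s = n r` turns this integral into exactly `A_N² ξ(n) / n²`. Since `Θ_n` is
decreasing, `r^{N-1} Θ_n(r)² ≤ 2^{N-1} (r/2)^{N-1} Θ_n(r/2)²`, so the annulus `[1, 2]` contributes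
at most `2^N` times the integral over `[1/2, 1]`. The bounds on `ξ` compare its integrand with
`1`, `s / (1 + s²)` and `1 / (1 + s²)` respectively.
-/

open Set intervalIntegral

lemma rpow_half_natCast_sq {x : ℝ} (hx : 0 ≤ x) (m : ℕ) : (x ^ ((m : ℝ) / 2)) ^ 2 = x ^ m := by
  rw [← Real.rpow_natCast _ 2, ← Real.rpow_mul hx, ← Real.rpow_natCast]
  congr 1
  push_cast
  ring

lemma AN_nonneg {N : ℕ} (hN : 2 ≤ N) : 0 ≤ AN N := by
  have : (2 : ℝ) ≤ N := by exact_mod_cast hN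
  unfold AN
  apply Real.rpow_nonneg
  nlinarith

section Profile

variable {N : ℕ} (n : ℕ) {r : ℝ}

lemma Θ_of_le_one (hr : r ≤ 1) :
    Θ N n r = AN N * ((n : ℝ) / (1 + (n : ℝ) ^ 2 * r ^ 2)) ^ (((N : ℝ) - 2) / 2) := by
  rcases hr.lt_or_eq with hr | rfl
  · simp only [Θ, if_pos hr]
  · norm_num [Θ]

lemma Θ_of_two_le (hr : 2 ≤ r) : Θ N n r = 0 := by
  simp only [Θ, if_neg (show ¬ r < 1 by linarith), if_neg (not_lt.2 hr)]

variable (hN : 2 ≤ N)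
include hN

lemma Θ_nonneg : 0 ≤ Θ N n r := by
  have := AN_nonneg hN
  unfold Θ
  split_ifs <;> positivity

lemma Θ_le_Θ_one (hr : 1 ≤ r) : Θ N n r ≤ Θ N n 1 := by
  rcases le_or_gt 2 r with h2 | h2
  · rw [Θ_of_two_le n h2]
    exact Θ_nonneg n hN
  · have := AN_nonneg hN
    simp only [Θ, if_neg (not_lt.2 hr), if_pos h2, lt_irrefl, if_false, one_lt_two, if_true]
    exact mul_le_mul_of_nonneg_left (by linarith) (by positivity)

lemma Θ_one_le_Θ (h0 : 0 ≤ r) (h1 : r ≤ 1) : Θ N n 1 ≤ Θ N n r := by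
  rw [Θ_of_le_one n h1, Θ_of_le_one n le_rfl]
  have hN' : (2 : ℝ) ≤ N := by exact_mod_cast hN
  gcongr
  exact AN_nonneg hN

lemma continuous_Θ : Continuous (Θ N n) := by
  have hN' : (0 : ℝ) ≤ ((N : ℝ) - 2) / 2 := by
    have : (2 : ℝ) ≤ N := by exact_mod_cast hN
    linarith
  have hrpow := Real.continuous_rpow_const hN'
  have hden : ∀ r : ℝ, 1 + (n : ℝ) ^ 2 * r ^ 2 ≠ 0 := fun r => by positivity
  unfold Θ
  simp only [← not_le, ite_not]
  refine Continuous.if_le ?_ ?_ continuous_const continuous_id ?_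
  · refine Continuous.if_le continuous_const (by fun_prop) continuous_const continuous_id ?_
    rintro r rfl
    norm_num
  · exact continuous_const.mul (hrpow.comp (continuous_const.div (by fun_prop) hden))
  · rintro r rfl
    norm_num

end Profile

lemma continuous_xi_integrand (N : ℕ) :
    Continuous fun s : ℝ => s ^ (N - 1) / (1 + s ^ 2) ^ (N - 2) :=
  continuous_id.pow _ |>.div (by fun_prop) fun s => by positivity

lemma xi_nonneg (N n : ℕ) : 0 ≤ ξ N n :=
  integral_nonneg (Nat.cast_nonneg n) fun s hs => by have := hs.1; positivity

section Integrals

variable {N : ℕ} (n : ℕ)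

lemma integral_zero_one_Θ_density (hN : 2 ≤ N) (hn : n ≠ 0) :
    ∫ r in (0 : ℝ)..1, r ^ (N - 1) * Θ N n r ^ 2 = AN N ^ 2 * (ξ N n / (n : ℝ) ^ 2) := by
  obtain ⟨k, rfl⟩ : ∃ k, N = k + 2 := ⟨N - 2, by omega⟩
  have hn' : (n : ℝ) ≠ 0 := by exact_mod_cast hn
  have hpt : ∀ r ∈ uIcc (0 : ℝ) 1, r ^ (k + 2 - 1) * Θ (k + 2) n r ^ 2
      = AN (k + 2) ^ 2 * ((n : ℝ)⁻¹ * ((n * r) ^ (k + 1) / (1 + (n * r) ^ 2) ^ k)) := by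
    intro r hr
    rw [uIcc_of_le zero_le_one] at hr
    rw [Θ_of_le_one n hr.2, mul_pow, show ((k + 2 : ℕ) : ℝ) - 2 = (k : ℕ) by push_cast; ring,
      rpow_half_natCast_sq (by positivity), div_pow]
    simp only [show k + 2 - 1 = k + 1 by omega]
    field_simp
    ring
  rw [integral_congr hpt, intervalIntegral.integral_const_mul,
    intervalIntegral.integral_const_mul,
    integral_comp_mul_left (fun s => s ^ (k + 1) / (1 + s ^ 2) ^ k) hn']
  simp only [ξ, mul_one, mul_zero, smul_eq_mul, show k + 2 - 1 = k + 1 by omega,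
    show k + 2 - 2 = k by omega]
  field_simp

variable (hN : 2 ≤ N)
include hN

lemma continuous_Θ_density : Continuous fun r : ℝ => r ^ (N - 1) * Θ N n r ^ 2 :=
  (continuous_pow _).mul ((continuous_Θ n hN).pow 2)

lemma integral_one_two_Θ_density_le :
    ∫ r in (1 : ℝ)..2, r ^ (N - 1) * Θ N n r ^ 2
      ≤ 2 ^ N * ∫ r in (0 : ℝ)..1, r ^ (N - 1) * Θ N n r ^ 2 := by
  set g := fun r : ℝ => r ^ (N - 1) * Θ N n r ^ 2
  have hg : Continuous g := continuous_Θ_density n hN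
  have hg0 : ∀ r, 0 ≤ r → 0 ≤ g r := fun r hr => mul_nonneg (pow_nonneg hr _) (sq_nonneg _)
  have hdom : ∀ r ∈ Icc (1 : ℝ) 2, g r ≤ 2 ^ (N - 1) * g (r / 2) := by
    rintro r ⟨h1, h2⟩
    have hΘ : Θ N n r ≤ Θ N n (r / 2) :=
      (Θ_le_Θ_one n hN h1).trans (Θ_one_le_Θ n hN (by linarith) (by linarith))
    calc g r = (2 * (r / 2)) ^ (N - 1) * Θ N n r ^ 2 := by rw [mul_div_cancel₀ r two_ne_zero]
      _ ≤ (2 * (r / 2)) ^ (N - 1) * Θ N n (r / 2) ^ 2 := by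
          gcongr
          exact Θ_nonneg n hN
      _ = 2 ^ (N - 1) * g (r / 2) := by simp only [g]; rw [mul_pow]; ring
  calc ∫ r in (1 : ℝ)..2, g r
      ≤ ∫ r in (1 : ℝ)..2, 2 ^ (N - 1) * g (r / 2) :=
        integral_mono_on one_le_two (hg.intervalIntegrable _ _)
          ((continuous_const.mul (hg.comp (continuous_id.div_const 2))).intervalIntegrable _ _) hdom
    _ = 2 ^ N * ∫ r in (1 / 2 : ℝ)..1, g r := by
        rw [intervalIntegral.integral_const_mul, integral_comp_div g two_ne_zero, smul_eq_mul,
          ← mul_assoc, ← pow_succ, Nat.sub_add_cancel (by omega)]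
        norm_num
    _ ≤ 2 ^ N * ∫ r in (0 : ℝ)..1, g r := by
        gcongr
        refine integral_mono_interval (by norm_num) (by norm_num) le_rfl ?_
          (hg.intervalIntegrable _ _)
        filter_upwards [ae_restrict_mem measurableSet_Ioc] with r hr
        exact hg0 r hr.1.le

end Integrals

lemma setIntegral_Ioi_Θ_density_le {N : ℕ} (n : ℕ) (hN : 2 ≤ N) (hn : n ≠ 0) :
    ∫ r in Ioi (0 : ℝ), r ^ (N - 1) * Θ N n r ^ 2
      ≤ (1 + 2 ^ N) * AN N ^ 2 * (ξ N n / (n : ℝ) ^ 2) := by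
  have hg := (continuous_Θ_density n hN).intervalIntegrable (μ := volume)
  calc ∫ r in Ioi (0 : ℝ), r ^ (N - 1) * Θ N n r ^ 2
      = ∫ r in (0 : ℝ)..2, r ^ (N - 1) * Θ N n r ^ 2 := by
        rw [integral_of_le zero_le_two]
        refine setIntegral_eq_of_subset_of_forall_sdiff_eq_zero measurableSet_Ioi
          Ioc_subset_Ioi_self fun r ⟨hr0, hr⟩ => ?_
        rw [Θ_of_two_le n (not_le.1 fun h => hr ⟨hr0, h⟩).le]
        ring
    _ = (∫ r in (0 : ℝ)..1, r ^ (N - 1) * Θ N n r ^ 2)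
          + ∫ r in (1 : ℝ)..2, r ^ (N - 1) * Θ N n r ^ 2 :=
        (integral_add_adjacent_intervals (hg _ _) (hg _ _)).symm
    _ ≤ (1 + 2 ^ N) * ∫ r in (0 : ℝ)..1, r ^ (N - 1) * Θ N n r ^ 2 := by
        linarith [integral_one_two_Θ_density_le n hN]
    _ = (1 + 2 ^ N) * AN N ^ 2 * (ξ N n / (n : ℝ) ^ 2) := by
        rw [integral_zero_one_Θ_density n hN hn]
        ring

lemma isBigO_integral_sq_Θ_norm {N : ℕ} (hN : 2 ≤ N) :
    (fun n : ℕ => ∫ x : EuclideanSpace ℝ (Fin N), (Θ N n ‖x‖) ^ 2) =O[atTop]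
      fun n : ℕ => ξ N n / (n : ℝ) ^ 2 := by
  have : Nonempty (Fin N) := ⟨⟨0, by omega⟩⟩
  set c := (volume : Measure (EuclideanSpace ℝ (Fin N))).real (Metric.ball 0 1)
  refine IsBigO.of_bound (N * c * ((1 + 2 ^ N) * AN N ^ 2)) ?_
  filter_upwards [eventually_ne_atTop 0] with n hn
  have hpolar : ∫ x : EuclideanSpace ℝ (Fin N), (Θ N n ‖x‖) ^ 2
      = N * c * ∫ r in Ioi (0 : ℝ), r ^ (N - 1) * Θ N n r ^ 2 := by
    simpa only [finrank_euclideanSpace_fin, smul_eq_mul, nsmul_eq_mul, mul_assoc] using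
      integral_fun_norm_addHaar (volume : Measure (EuclideanSpace ℝ (Fin N))) fun r => Θ N n r ^ 2
  rw [Real.norm_of_nonneg (integral_nonneg fun x => sq_nonneg _),
    Real.norm_of_nonneg (div_nonneg (xi_nonneg N n) (by positivity)), hpolar,
    mul_assoc _ _ (_ / _)]
  exact mul_le_mul_of_nonneg_left (setIntegral_Ioi_Θ_density_le n hN hn) (by positivity)

lemma xi_le_integral {N n : ℕ} {g : ℝ → ℝ} (hg : IntervalIntegrable g volume 0 n)
    (h : ∀ s : ℝ, 0 ≤ s → s ^ (N - 1) / (1 + s ^ 2) ^ (N - 2) ≤ g s) :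
    ξ N n ≤ ∫ s in (0 : ℝ)..n, g s :=
  integral_mono_on (Nat.cast_nonneg n) ((continuous_xi_integrand N).intervalIntegrable _ _) hg
    fun s hs => h s hs.1

lemma xi_three_le (n : ℕ) : ξ 3 n ≤ n := by
  simpa using xi_le_integral (N := 3) (n := n) intervalIntegrable_const fun s _ =>
    (div_le_one (by positivity)).2 (by norm_num)

lemma integral_div_one_add_sq (b : ℝ) :
    ∫ s in (0 : ℝ)..b, s / (1 + s ^ 2) = Real.log (1 + b ^ 2) / 2 := by
  have hderiv : ∀ s : ℝ, HasDerivAt (fun s => Real.log (1 + s ^ 2) / 2) (s / (1 + s ^ 2)) s := by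
    intro s
    refine ((((hasDerivAt_pow 2 s).const_add 1).log (by positivity)).div_const 2).congr_deriv ?_
    field_simp
    ring
  rw [integral_eq_sub_of_hasDerivAt (fun s _ => hderiv s)
    ((continuous_id.div (by fun_prop) fun s => by positivity).intervalIntegrable _ _)]
  simp

lemma xi_four_le (n : ℕ) : ξ 4 n ≤ Real.log (1 + (n : ℝ) ^ 2) / 2 := by
  rw [← integral_div_one_add_sq]
  refine xi_le_integral
    ((continuous_id.div (by fun_prop) fun s => by positivity).intervalIntegrable _ _) fun s hs => ?_
  show s ^ 3 / (1 + s ^ 2) ^ 2 ≤ s / (1 + s ^ 2)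
  rw [div_le_div_iff₀ (by positivity) (by positivity)]
  nlinarith [pow_nonneg hs 3]

lemma xi_le_pi_div_two {N : ℕ} (hN : 5 ≤ N) (n : ℕ) : ξ N n ≤ Real.pi / 2 := by
  obtain ⟨k, rfl⟩ : ∃ k, N = k + 5 := ⟨N - 5, by omega⟩
  calc ξ (k + 5) n ≤ ∫ s in (0 : ℝ)..n, 1 / (1 + s ^ 2) := by
        refine xi_le_integral ((continuous_const.div (by fun_prop) fun s => by positivity)
          |>.intervalIntegrable _ _) fun s hs => ?_
        have hs' : s ≤ 1 + s ^ 2 := by nlinarith [sq_nonneg (s - 1)]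
        have hs4 : s ^ 4 ≤ (1 + s ^ 2) ^ 2 := by nlinarith [sq_nonneg s]
        rw [div_le_div_iff₀ (by positivity) (by positivity), show k + 5 - 1 = k + 4 by omega,
          show k + 5 - 2 = k + 3 by omega, one_mul, pow_add, pow_succ _ (k + 2), pow_add]
        gcongr
    _ = Real.arctan n := by simp
    _ ≤ Real.pi / 2 := (Real.arctan_lt_pi_div_two _).le

/-- Mass asymptotics of the truncated Aubin–Talenti bubble: `‖U_n‖₂² = O(ξ(n)/n²)`, where
`ξ(n) = O(n)` for `N = 3`, `ξ(n) = O(log(1+n²))` for `N = 4`, and `ξ(n) = O(1)` for `N ≥ 5`. -/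
theorem stmt16 (N : ℕ) (hN : 3 ≤ N) :
    ((fun n : ℕ => ∫ x : EuclideanSpace ℝ (Fin N), (Θ N n ‖x‖) ^ 2) =O[atTop]
      fun n : ℕ => ξ N n / (n : ℝ) ^ 2) ∧
    (N = 3 → (fun n : ℕ => ξ N n) =O[atTop] fun n : ℕ => (n : ℝ)) ∧
    (N = 4 → (fun n : ℕ => ξ N n) =O[atTop] fun n : ℕ => Real.log (1 + (n : ℝ) ^ 2)) ∧
    (5 ≤ N → (fun n : ℕ => ξ N n) =O[atTop] fun _ : ℕ => (1 : ℝ)) := by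
  refine ⟨isBigO_integral_sq_Θ_norm (by omega), ?_, ?_, ?_⟩
  · rintro rfl
    refine isBigO_of_le _ fun n => ?_
    rw [Real.norm_of_nonneg (xi_nonneg 3 n), Real.norm_natCast]
    exact xi_three_le n
  · rintro rfl
    refine isBigO_of_le' (c := 1 / 2) _ fun n => ?_
    rw [Real.norm_of_nonneg (xi_nonneg 4 n),
      Real.norm_of_nonneg (Real.log_nonneg (by nlinarith [sq_nonneg (n : ℝ)]))]
    linarith [xi_four_le n]
  · intro h5
    refine isBigO_of_le' (c := Real.pi / 2) _ fun n => ?_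
    rw [Real.norm_of_nonneg (xi_nonneg N n), norm_one, mul_one]
    exact xi_le_pi_div_two h5 n
end

section
/- (Gradient asymptotics of the truncated bubble) With $U_n$ as the truncated Aubin–Talenti bubble ($\Theta_n(r) = A_N(n/(1+n^2r^2))^{(N-2)/2}$ on $[0,1)$, affine cutoff on $[1,2)$, zero beyond), one has $\|\nabla U_n\|_{L^2(\mathbb{R}^N)}^2 = \mathcal{S}^{N/2} + O(n^{-(N-2)})$ and $\|U_n\|_{L^{2^*}(\mathbb{R}^N)}^{2^*} = \mathcal{S}^{N/2} + O(n^{-N})$ as $n \to \infty$, where $\mathcal{S}$ is the best Sobolev constant and the identities $\omega_N A_N^2 (N-2)^2 \int_0^\infty \frac{s^{N+1}}{(1+s^2)^N}ds = \mathcal{S}^{N/2} = \omega_N A_N^{2^*}\int_0^\infty \frac{s^{N-1}}{(1+s^2)^N}ds$ hold. -/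
/-!
On `(0, 1)` the profile is the exact bubble, so both radial integrands there are constant
multiples of `r^k / (1 + n²r²)^N` (`k = N + 1` for the gradient, `k = N - 1` for the critical
norm). The substitution `s = n r` turns the integral of this kernel over `(0, ∞)` into
`n^{-(k+1)}` times the full-space Aubin–Talenti integral, while its part over `(1, ∞)` is at most
`n^{-2N} ∫₁^∞ r^{k-2N} dr`; this gives the errors `n^{k+1-2N}`. On the annulus `(1, 2)` the
integrands are bounded by `2^{N-1}` times a power of the cutoff height
`A_N (n/(1+n²))^{(N-2)/2} ≤ A_N n^{-(N-2)/2}`, and beyond `2` they vanish.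
-/

open MeasureTheory Filter Asymptotics

open Set

noncomputable def bubbleKernel (b : ℝ) (k N : ℕ) (r : ℝ) : ℝ := r ^ k / (1 + b ^ 2 * r ^ 2) ^ N

section bubbleKernel

variable {b : ℝ} {k N : ℕ}

theorem continuous_bubbleKernel (b : ℝ) (k N : ℕ) : Continuous (bubbleKernel b k N) :=
  (continuous_pow k).div (by fun_prop) fun r => by positivity

theorem bubbleKernel_nonneg {r : ℝ} (hr : 0 ≤ r) : 0 ≤ bubbleKernel b k N r := by
  unfold bubbleKernel; positivity

theorem bubbleKernel_le (hb : b ≠ 0) {r : ℝ} (hr : 0 < r) :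
    bubbleKernel b k N r ≤ (b ^ (2 * N))⁻¹ * r ^ ((k : ℝ) - 2 * N) := by
  have hden : (b ^ 2 * r ^ 2) ^ N ≤ (1 + b ^ 2 * r ^ 2) ^ N :=
    pow_le_pow_left₀ (by positivity) (by linarith) N
  calc bubbleKernel b k N r ≤ r ^ k / (b ^ 2 * r ^ 2) ^ N :=
        div_le_div_of_nonneg_left (by positivity) (by positivity) hden
    _ = (b ^ (2 * N))⁻¹ * r ^ ((k : ℝ) - 2 * N) := by
        rw [Real.rpow_sub hr, Real.rpow_natCast,
          show (2 : ℝ) * N = ((2 * N : ℕ) : ℝ) by push_cast; ring, Real.rpow_natCast, mul_pow,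
          ← pow_mul, ← pow_mul]
        field_simp

theorem integrableOn_Ioi_one_bubbleKernel (hb : b ≠ 0) (hk : k + 1 < 2 * N) :
    IntegrableOn (bubbleKernel b k N) (Ioi 1) := by
  have hk' : (k : ℝ) - 2 * N < -1 := by
    have : ((k + 1 : ℕ) : ℝ) < ((2 * N : ℕ) : ℝ) := by exact_mod_cast hk
    push_cast at this; linarith
  refine ((integrableOn_Ioi_rpow_of_lt hk' one_pos).const_mul (b ^ (2 * N))⁻¹).mono'
    (continuous_bubbleKernel b k N).aestronglyMeasurable ?_
  filter_upwards [ae_restrict_mem measurableSet_Ioi] with r (hr : 1 < r)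
  rw [Real.norm_eq_abs, abs_of_nonneg (bubbleKernel_nonneg (by linarith))]
  exact bubbleKernel_le hb (by linarith)

theorem integral_Ioi_bubbleKernel (hb : 0 < b) :
    ∫ r in Ioi (0 : ℝ), bubbleKernel b k N r =
      (b ^ (k + 1))⁻¹ * ∫ s in Ioi (0 : ℝ), bubbleKernel 1 k N s := by
  have hscale : ∀ r, bubbleKernel 1 k N (b * r) = b ^ k * bubbleKernel b k N r := fun r => by
    simp only [bubbleKernel, one_pow, one_mul, mul_pow, mul_div_assoc]
  have h := integral_comp_mul_left_Ioi (bubbleKernel 1 k N) 0 hb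
  simp only [hscale, mul_zero, smul_eq_mul, integral_const_mul] at h
  rw [eq_inv_mul_iff_mul_eq₀ (by positivity), pow_succ', mul_assoc, h,
    mul_inv_cancel_left₀ hb.ne']

theorem integral_Ioo_zero_one_bubbleKernel (hb : 0 < b) (hk : k + 1 < 2 * N) :
    b ^ (k + 1) * ∫ r in Ioo (0 : ℝ) 1, bubbleKernel b k N r =
      (∫ s in Ioi (0 : ℝ), bubbleKernel 1 k N s) -
        b ^ (k + 1) * ∫ r in Ioi (1 : ℝ), bubbleKernel b k N r := by
  have hsplit := setIntegral_union (Ioc_disjoint_Ioi (a := (0 : ℝ)) le_rfl) measurableSet_Ioi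
    (continuous_bubbleKernel b k N).integrableOn_Ioc (integrableOn_Ioi_one_bubbleKernel hb.ne' hk)
  rw [Ioc_union_Ioi_eq_Ioi zero_le_one, integral_Ioi_bubbleKernel hb, integral_Ioc_eq_integral_Ioo]
    at hsplit
  rw [eq_sub_iff_add_eq, ← mul_add, ← hsplit, mul_inv_cancel_left₀ (pow_ne_zero _ hb.ne')]

theorem setIntegral_Ioi_one_bubbleKernel_le (hb : b ≠ 0) (hk : k + 1 < 2 * N) :
    ∫ r in Ioi (1 : ℝ), bubbleKernel b k N r ≤
      (b ^ (2 * N))⁻¹ * ∫ r in Ioi (1 : ℝ), r ^ ((k : ℝ) - 2 * N) := by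
  have hk' : (k : ℝ) - 2 * N < -1 := by
    have : ((k + 1 : ℕ) : ℝ) < ((2 * N : ℕ) : ℝ) := by exact_mod_cast hk
    push_cast at this; linarith
  rw [← integral_const_mul]
  refine setIntegral_mono_on (integrableOn_Ioi_one_bubbleKernel hb hk)
    ((integrableOn_Ioi_rpow_of_lt hk' one_pos).const_mul _) measurableSet_Ioi fun r hr => ?_
  exact bubbleKernel_le hb (zero_lt_one.trans hr)

theorem isBigO_bubbleKernel (hk : k + 1 < 2 * N) :
    (fun n : ℕ => (n : ℝ) ^ (k + 1) * (∫ r in Ioo (0 : ℝ) 1, bubbleKernel n k N r)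
        - ∫ s in Ioi (0 : ℝ), bubbleKernel 1 k N s) =O[atTop]
      fun n : ℕ => (n : ℝ) ^ ((k : ℝ) + 1 - 2 * N) := by
  set C := ∫ r in Ioi (1 : ℝ), r ^ ((k : ℝ) - 2 * N)
  refine IsBigO.of_bound C ?_
  filter_upwards [eventually_gt_atTop 0] with n hn
  have hn : (0 : ℝ) < n := Nat.cast_pos.mpr hn
  have htail_nonneg : 0 ≤ ∫ r in Ioi (1 : ℝ), bubbleKernel n k N r :=
    setIntegral_nonneg measurableSet_Ioi fun r hr => bubbleKernel_nonneg (zero_le_one.trans hr.le)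
  rw [integral_Ioo_zero_one_bubbleKernel hn hk, sub_sub_cancel_left, norm_neg,
    Real.norm_of_nonneg (by positivity), Real.norm_of_nonneg (by positivity),
    Real.rpow_sub hn, Real.rpow_add hn, Real.rpow_natCast, Real.rpow_one,
    show (2 : ℝ) * N = ((2 * N : ℕ) : ℝ) by push_cast; ring, Real.rpow_natCast, ← pow_succ]
  calc (n : ℝ) ^ (k + 1) * ∫ r in Ioi (1 : ℝ), bubbleKernel n k N r
      ≤ (n : ℝ) ^ (k + 1) * (((n : ℝ) ^ (2 * N))⁻¹ * C) := by
        gcongr; exact setIntegral_Ioi_one_bubbleKernel_le hn.ne' hk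
    _ = C * ((n : ℝ) ^ (k + 1) / n ^ (2 * N)) := by rw [div_eq_mul_inv]; ring

theorem bubbleKernel_one (k N : ℕ) (s : ℝ) : bubbleKernel 1 k N s = s ^ k / (1 + s ^ 2) ^ N := by
  simp [bubbleKernel]

end bubbleKernel

theorem integral_Ioi_zero_eq_of_eqOn {f g h : ℝ → ℝ} (hg : Continuous g) (hh : Continuous h)
    (hfg : EqOn f g (Ioo 0 1)) (hfh : EqOn f h (Ioo 1 2)) (hf : EqOn f 0 (Ioi 2)) :
    ∫ r in Ioi 0, f r = (∫ r in Ioo 0 1, g r) + ∫ r in Ioo 1 2, h r := by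
  have hf₁ : IntegrableOn f (Ioc 0 1) := by
    rw [integrableOn_Ioc_iff_integrableOn_Ioo]
    exact (hg.integrableOn_Icc.mono_set Ioo_subset_Icc_self).congr_fun hfg.symm measurableSet_Ioo
  have hf₂ : IntegrableOn f (Ioc 1 2) := by
    rw [integrableOn_Ioc_iff_integrableOn_Ioo]
    exact (hh.integrableOn_Icc.mono_set Ioo_subset_Icc_self).congr_fun hfh.symm measurableSet_Ioo
  have hf₃ : IntegrableOn f (Ioi 2) := integrableOn_zero.congr_fun hf.symm measurableSet_Ioi
  have hf₂₃ : IntegrableOn f (Ioi 1) := by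
    rw [← Ioc_union_Ioi_eq_Ioi one_le_two]; exact hf₂.union hf₃
  rw [← Ioc_union_Ioi_eq_Ioi zero_le_one, setIntegral_union (Ioc_disjoint_Ioi le_rfl)
      measurableSet_Ioi hf₁ hf₂₃, ← Ioc_union_Ioi_eq_Ioi one_le_two,
    setIntegral_union (Ioc_disjoint_Ioi le_rfl) measurableSet_Ioi hf₂ hf₃,
    integral_Ioc_eq_integral_Ioo, integral_Ioc_eq_integral_Ioo,
    setIntegral_congr_fun measurableSet_Ioo hfg, setIntegral_congr_fun measurableSet_Ioo hfh,
    setIntegral_congr_fun measurableSet_Ioi hf]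
  simp

theorem norm_setIntegral_Ioo_one_two_le {m : ℕ} {φ : ℝ → ℝ} {c : ℝ}
    (hφ : ∀ r ∈ Ioo (1 : ℝ) 2, ‖φ r‖ ≤ c) : ‖∫ r in Ioo (1 : ℝ) 2, r ^ m * φ r‖ ≤ 2 ^ m * c := by
  have h := norm_setIntegral_le_of_norm_le_const (f := fun r => r ^ m * φ r)
    (C := 2 ^ m * c) (measure_Ioo_lt_top (μ := volume)) fun r hr => by
      rw [norm_mul, norm_pow, Real.norm_of_nonneg (zero_le_one.trans hr.1.le)]
      exact mul_le_mul (pow_le_pow_left₀ (zero_le_one.trans hr.1.le) hr.2.le m) (hφ r hr)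
        (norm_nonneg _) (by positivity)
  rwa [Real.volume_real_Ioo_of_le one_le_two, show (2 : ℝ) - 1 = 1 by norm_num, mul_one] at h

theorem sub_two_pos_of_three_le {N : ℕ} (hN : 3 ≤ N) : (0 : ℝ) < N - 2 := by
  have : (3 : ℝ) ≤ N := by exact_mod_cast hN
  linarith

theorem AN_pos {N : ℕ} (hN : 3 ≤ N) : 0 < AN N :=
  Real.rpow_pos_of_pos (mul_pos (by positivity) (sub_two_pos_of_three_le hN)) _

noncomputable def cutoffHeight (N n : ℕ) : ℝ :=
  AN N * ((n : ℝ) / (1 + (n : ℝ) ^ 2)) ^ (((N : ℝ) - 2) / 2)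

section profile

variable {N n : ℕ} {r : ℝ}

theorem Θ_of_lt_one (hr : r < 1) :
    Θ N n r = AN N * ((n : ℝ) / (1 + (n : ℝ) ^ 2 * r ^ 2)) ^ (((N : ℝ) - 2) / 2) := if_pos hr

theorem Θ_of_mem_Ioo_one_two (hr : r ∈ Ioo 1 2) : Θ N n r = cutoffHeight N n * (2 - r) := by
  rw [Θ, if_neg hr.1.not_gt, if_pos hr.2, cutoffHeight]

theorem Θ_of_two_lt (hr : 2 < r) : Θ N n r = 0 := by
  rw [Θ, if_neg (by linarith), if_neg hr.not_gt]

theorem hasDerivAt_Θ_of_lt_one (hn : 0 < n) (hr : r < 1) :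
    HasDerivAt (Θ N n) (-((N : ℝ) - 2) * AN N * n * r *
      ((n : ℝ) / (1 + (n : ℝ) ^ 2 * r ^ 2)) ^ (((N : ℝ) - 2) / 2 + 1)) r := by
  set c : ℝ := ((N : ℝ) - 2) / 2
  set u : ℝ → ℝ := fun x => (n : ℝ) / (1 + (n : ℝ) ^ 2 * x ^ 2)
  have hn : (0 : ℝ) < n := Nat.cast_pos.mpr hn
  have hu : u r ≠ 0 := by positivity
  have hΘ : Θ N n =ᶠ[nhds r] fun x => AN N * u x ^ c :=
    (eventually_lt_nhds hr).mono fun x hx => Θ_of_lt_one hx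
  have hden : HasDerivAt (fun x : ℝ => 1 + (n : ℝ) ^ 2 * x ^ 2) ((n : ℝ) ^ 2 * (2 * r)) r := by
    simpa using ((hasDerivAt_pow 2 r).const_mul ((n : ℝ) ^ 2)).const_add 1
  have hu' : HasDerivAt u (-2 * n * r * u r ^ 2) r :=
    ((hasDerivAt_const r (n : ℝ)).div hden (by positivity)).congr_deriv (by
      simp only [u]; field_simp; ring)
  refine (((hu'.rpow_const (Or.inl hu)).const_mul (AN N)).congr_of_eventuallyEq hΘ).congr_deriv ?_
  have hpow : u r ^ (c - 1) * u r ^ 2 = u r ^ (c + 1) := by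
    rw [← Real.rpow_natCast, ← Real.rpow_add (by positivity)]; norm_num; ring_nf
  show _ = -((N : ℝ) - 2) * AN N * n * r * u r ^ (c + 1)
  rw [← hpow]; simp only [c]; ring

theorem deriv_Θ_of_mem_Ioo_one_two (hr : r ∈ Ioo 1 2) : deriv (Θ N n) r = -cutoffHeight N n := by
  have hΘ : Θ N n =ᶠ[nhds r] fun x => cutoffHeight N n * (2 - x) :=
    eventually_of_mem (isOpen_Ioo.mem_nhds hr) fun x hx => Θ_of_mem_Ioo_one_two hx
  have hd : HasDerivAt (fun x => cutoffHeight N n * (2 - x)) (cutoffHeight N n * (0 - 1)) r :=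
    ((hasDerivAt_const r 2).sub (hasDerivAt_id' r)).const_mul _
  rw [hΘ.deriv_eq, hd.deriv]; ring

theorem deriv_Θ_of_two_lt (hr : 2 < r) : deriv (Θ N n) r = 0 := by
  have hΘ : Θ N n =ᶠ[nhds r] fun _ => 0 := (eventually_gt_nhds hr).mono fun x hx => Θ_of_two_lt hx
  rw [hΘ.deriv_eq, deriv_const]

theorem rpow_mul_deriv_Θ_sq (hN : 1 ≤ N) (hn : 0 < n) (hr : r < 1) :
    r ^ (N - 1) * deriv (Θ N n) r ^ 2 =
      AN N ^ 2 * ((N : ℝ) - 2) ^ 2 * (n : ℝ) ^ (N + 2) * bubbleKernel n (N + 1) N r := by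
  set u : ℝ := (n : ℝ) / (1 + (n : ℝ) ^ 2 * r ^ 2)
  have hu : 0 ≤ u := by positivity
  have hsq : (u ^ (((N : ℝ) - 2) / 2 + 1)) ^ 2 = u ^ N := by
    rw [← Real.rpow_natCast, ← Real.rpow_mul hu, ← Real.rpow_natCast]; push_cast; ring_nf
  have hr2 : r ^ (N + 1) = r ^ (N - 1) * r ^ 2 := by rw [← pow_add]; congr 1; omega
  rw [(hasDerivAt_Θ_of_lt_one hn hr).deriv, mul_pow, hsq, bubbleKernel, hr2, div_pow]
  ring

theorem rpow_mul_Θ_rpow (hN : 3 ≤ N) (hn : 0 < n) (hr : r < 1) {p : ℝ}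
    (hp : p = 2 * (N : ℝ) / ((N : ℝ) - 2)) :
    r ^ (N - 1) * Θ N n r ^ p = AN N ^ p * (n : ℝ) ^ N * bubbleKernel n (N - 1) N r := by
  have hN' := sub_two_pos_of_three_le hN
  have hu : 0 ≤ (n : ℝ) / (1 + (n : ℝ) ^ 2 * r ^ 2) := by positivity
  have hcp : ((N : ℝ) - 2) / 2 * p = N := by rw [hp]; field_simp
  rw [Θ_of_lt_one hr, Real.mul_rpow (AN_pos hN).le (Real.rpow_nonneg hu _), ← Real.rpow_mul hu,
    hcp, Real.rpow_natCast, div_pow, bubbleKernel]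
  ring

theorem cutoffHeight_nonneg (hN : 3 ≤ N) : 0 ≤ cutoffHeight N n :=
  mul_nonneg (AN_pos hN).le (Real.rpow_nonneg (by positivity) _)

theorem cutoffHeight_rpow_le (hN : 3 ≤ N) (hn : 0 < n) {s : ℝ} (hs : 0 ≤ s) :
    cutoffHeight N n ^ s ≤ AN N ^ s * (n : ℝ) ^ (-(((N : ℝ) - 2) / 2 * s)) := by
  have hn : (0 : ℝ) < n := Nat.cast_pos.mpr hn
  have hq : (n : ℝ) / (1 + (n : ℝ) ^ 2) ≤ (n : ℝ)⁻¹ := by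
    rw [div_le_iff₀ (by positivity), inv_mul_eq_div, le_div_iff₀ hn]; nlinarith
  have hN' := sub_two_pos_of_three_le hN
  rw [cutoffHeight, Real.mul_rpow (AN_pos hN).le (Real.rpow_nonneg (by positivity) _),
    ← Real.rpow_mul (by positivity), Real.rpow_neg hn.le, ← Real.inv_rpow hn.le]
  exact mul_le_mul_of_nonneg_left (by gcongr) (Real.rpow_nonneg (AN_pos hN).le s)

theorem integral_gradient_Θ_eq (hN : 1 ≤ N) (hn : 0 < n) :
    ∫ r in Ioi (0 : ℝ), r ^ (N - 1) * deriv (Θ N n) r ^ 2 =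
      AN N ^ 2 * ((N : ℝ) - 2) ^ 2 *
          ((n : ℝ) ^ (N + 2) * ∫ r in Ioo (0 : ℝ) 1, bubbleKernel n (N + 1) N r) +
        ∫ r in Ioo (1 : ℝ) 2, r ^ (N - 1) * cutoffHeight N n ^ 2 := by
  rw [integral_Ioi_zero_eq_of_eqOn
      (g := fun r => AN N ^ 2 * ((N : ℝ) - 2) ^ 2 * (n : ℝ) ^ (N + 2) * bubbleKernel n (N + 1) N r)
      (h := fun r => r ^ (N - 1) * cutoffHeight N n ^ 2)
      (continuous_const.mul (continuous_bubbleKernel _ _ _)) (by fun_prop)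
      (fun r hr => rpow_mul_deriv_Θ_sq hN hn hr.2)
      (fun r hr => by rw [deriv_Θ_of_mem_Ioo_one_two hr, neg_sq])
      (fun r hr => by simp [deriv_Θ_of_two_lt (mem_Ioi.mp hr)]),
    integral_const_mul, mul_assoc]

theorem integral_critical_Θ_eq (hN : 3 ≤ N) (hn : 0 < n) {p : ℝ}
    (hp : p = 2 * (N : ℝ) / ((N : ℝ) - 2)) :
    ∫ r in Ioi (0 : ℝ), r ^ (N - 1) * Θ N n r ^ p =
      AN N ^ p * ((n : ℝ) ^ N * ∫ r in Ioo (0 : ℝ) 1, bubbleKernel n (N - 1) N r) +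
        ∫ r in Ioo (1 : ℝ) 2, r ^ (N - 1) * (cutoffHeight N n * (2 - r)) ^ p := by
  have hp₀ : 0 < p := by rw [hp]; exact div_pos (by positivity) (sub_two_pos_of_three_le hN)
  rw [integral_Ioi_zero_eq_of_eqOn
      (g := fun r => AN N ^ p * (n : ℝ) ^ N * bubbleKernel n (N - 1) N r)
      (h := fun r => r ^ (N - 1) * (cutoffHeight N n * (2 - r)) ^ p)
      (continuous_const.mul (continuous_bubbleKernel _ _ _))
      ((continuous_pow _).mul ((by fun_prop : Continuous fun r : ℝ => cutoffHeight N n * (2 - r))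
        |>.rpow_const fun _ => Or.inr hp₀.le))
      (fun r hr => rpow_mul_Θ_rpow hN hn hr.2 hp)
      (fun r hr => by rw [Θ_of_mem_Ioo_one_two hr])
      (fun r hr => by simp [Θ_of_two_lt (mem_Ioi.mp hr), Real.zero_rpow hp₀.ne']),
    integral_const_mul, mul_assoc]

theorem isBigO_setIntegral_Ioo_one_two (hN : 3 ≤ N) {m : ℕ} {φ : ℕ → ℝ → ℝ} {s : ℝ} (hs : 0 ≤ s)
    (hφ : ∀ n, ∀ r ∈ Ioo (1 : ℝ) 2, ‖φ n r‖ ≤ cutoffHeight N n ^ s) :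
    (fun n : ℕ => ∫ r in Ioo (1 : ℝ) 2, r ^ m * φ n r) =O[atTop]
      fun n : ℕ => (n : ℝ) ^ (-(((N : ℝ) - 2) / 2 * s)) := by
  refine IsBigO.of_bound (2 ^ m * AN N ^ s) ?_
  filter_upwards [eventually_gt_atTop 0] with n hn
  calc ‖∫ r in Ioo (1 : ℝ) 2, r ^ m * φ n r‖ ≤ 2 ^ m * cutoffHeight N n ^ s :=
        norm_setIntegral_Ioo_one_two_le (hφ n)
    _ ≤ 2 ^ m * (AN N ^ s * (n : ℝ) ^ (-(((N : ℝ) - 2) / 2 * s))) := by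
        gcongr; exact cutoffHeight_rpow_le hN hn hs
    _ = 2 ^ m * AN N ^ s * ‖(n : ℝ) ^ (-(((N : ℝ) - 2) / 2 * s))‖ := by
        rw [Real.norm_of_nonneg (by positivity), mul_assoc]

theorem isBigO_integral_gradient_Θ_sub (hN : 3 ≤ N) :
    (fun n : ℕ => (∫ r in Ioi (0 : ℝ), r ^ (N - 1) * deriv (Θ N n) r ^ 2) -
        AN N ^ 2 * ((N : ℝ) - 2) ^ 2 * ∫ s in Ioi (0 : ℝ), bubbleKernel 1 (N + 1) N s) =O[atTop]
      fun n : ℕ => (n : ℝ) ^ (-((N : ℝ) - 2)) := by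
  have hcore := isBigO_bubbleKernel (k := N + 1) (N := N) (by omega)
  have hannulus := isBigO_setIntegral_Ioo_one_two hN (m := N - 1)
    (φ := fun n _ => cutoffHeight N n ^ 2) zero_le_two fun n r _ => by
      rw [Real.rpow_two, Real.norm_of_nonneg (sq_nonneg _)]
  rw [show ((N + 1 : ℕ) : ℝ) + 1 - 2 * N = -((N : ℝ) - 2) by push_cast; ring] at hcore
  rw [show -(((N : ℝ) - 2) / 2 * 2) = -((N : ℝ) - 2) by ring] at hannulus
  refine ((hcore.const_mul_left (AN N ^ 2 * ((N : ℝ) - 2) ^ 2)).add hannulus).congr' ?_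
    EventuallyEq.rfl
  filter_upwards [eventually_gt_atTop 0] with n hn
  rw [integral_gradient_Θ_eq (by omega) hn]
  ring

theorem isBigO_integral_critical_Θ_sub (hN : 3 ≤ N) {p : ℝ}
    (hp : p = 2 * (N : ℝ) / ((N : ℝ) - 2)) :
    (fun n : ℕ => (∫ r in Ioi (0 : ℝ), r ^ (N - 1) * Θ N n r ^ p) -
        AN N ^ p * ∫ s in Ioi (0 : ℝ), bubbleKernel 1 (N - 1) N s) =O[atTop]
      fun n : ℕ => (n : ℝ) ^ (-(N : ℝ)) := by
  have hN' := sub_two_pos_of_three_le hN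
  have hp₀ : 0 ≤ p := by rw [hp]; exact div_nonneg (by positivity) hN'.le
  have hcore := isBigO_bubbleKernel (k := N - 1) (N := N) (by omega)
  have hannulus := isBigO_setIntegral_Ioo_one_two hN (m := N - 1)
    (φ := fun n r => (cutoffHeight N n * (2 - r)) ^ p) hp₀ fun n r hr => by
      have hbase : 0 ≤ cutoffHeight N n * (2 - r) :=
        mul_nonneg (cutoffHeight_nonneg hN) (by linarith [hr.2])
      rw [Real.norm_of_nonneg (Real.rpow_nonneg hbase p)]
      exact Real.rpow_le_rpow hbase
        (mul_le_of_le_one_right (cutoffHeight_nonneg hN) (by linarith [hr.1])) hp₀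
  rw [show ((N - 1 : ℕ) : ℝ) + 1 - 2 * N = -(N : ℝ) by push_cast [show 1 ≤ N by omega]; ring,
    Nat.sub_add_cancel (by omega)] at hcore
  rw [show -(((N : ℝ) - 2) / 2 * p) = -(N : ℝ) by rw [hp]; field_simp] at hannulus
  refine ((hcore.const_mul_left (AN N ^ p)).add hannulus).congr' ?_ EventuallyEq.rfl
  filter_upwards [eventually_gt_atTop 0] with n hn
  rw [integral_critical_Θ_eq hN hn hp]
  ring

end profile

/-- `ω ∫₀^∞ r^{N-1} Θ'(r)² dr` and `ω ∫₀^∞ r^{N-1} Θ(r)^p dr` are `‖∇U_n‖₂²` and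
`‖U_n‖_{2^*}^{2^*}` in polar coordinates. -/
theorem stmt17_general (N : ℕ) (hN : 3 ≤ N) (p : ℝ) (hp : p = 2 * (N : ℝ) / ((N : ℝ) - 2))
    (ω S : ℝ)
    (hid1 : ω * (AN N) ^ 2 * ((N : ℝ) - 2) ^ 2 *
      (∫ s in Set.Ioi (0 : ℝ), s ^ (N + 1) / (1 + s ^ 2) ^ N) = S ^ ((N : ℝ) / 2))
    (hid2 : ω * (AN N) ^ p *
      (∫ s in Set.Ioi (0 : ℝ), s ^ (N - 1) / (1 + s ^ 2) ^ N) = S ^ ((N : ℝ) / 2)) :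
    ((fun n : ℕ => ω * (∫ r in Set.Ioi (0 : ℝ), r ^ (N - 1) * (deriv (Θ N n) r) ^ 2)
        - S ^ ((N : ℝ) / 2)) =O[atTop] fun n : ℕ => (n : ℝ) ^ (-((N : ℝ) - 2))) ∧
    ((fun n : ℕ => ω * (∫ r in Set.Ioi (0 : ℝ), r ^ (N - 1) * (Θ N n r) ^ p)
        - S ^ ((N : ℝ) / 2)) =O[atTop] fun n : ℕ => (n : ℝ) ^ (-(N : ℝ))) := by
  simp only [← bubbleKernel_one] at hid1 hid2
  refine ⟨((isBigO_integral_gradient_Θ_sub hN).const_mul_left ω).congr_left fun n => ?_,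
    ((isBigO_integral_critical_Θ_sub hN hp).const_mul_left ω).congr_left fun n => ?_⟩
  · rw [← hid1]; ring
  · rw [← hid2]; ring

/-- Gradient and critical-norm asymptotics of the truncated bubble, in radial form:
`‖∇U_n‖₂² = ω_N ∫₀^∞ r^{N-1} Θ_n'(r)² dr = S^{N/2} + O(n^{-(N-2)})` and
`‖U_n‖_{2^*}^{2^*} = ω_N ∫₀^∞ r^{N-1} Θ_n(r)^{2^*} dr = S^{N/2} + O(n^{-N})`, using the
Aubin–Talenti identities expressing `S^{N/2}` through the full-space radial integrals. -/
theorem stmt17 (N : ℕ) (hN : 3 ≤ N) (p : ℝ) (hp : p = 2 * (N : ℝ) / ((N : ℝ) - 2))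
    (ω S : ℝ) (hω : 0 < ω) (hS : 0 < S)
    (hid1 : ω * (AN N) ^ 2 * ((N : ℝ) - 2) ^ 2 *
      (∫ s in Set.Ioi (0 : ℝ), s ^ (N + 1) / (1 + s ^ 2) ^ N) = S ^ ((N : ℝ) / 2))
    (hid2 : ω * (AN N) ^ p *
      (∫ s in Set.Ioi (0 : ℝ), s ^ (N - 1) / (1 + s ^ 2) ^ N) = S ^ ((N : ℝ) / 2)) :
    ((fun n : ℕ => ω * (∫ r in Set.Ioi (0 : ℝ), r ^ (N - 1) * (deriv (Θ N n) r) ^ 2)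
        - S ^ ((N : ℝ) / 2)) =O[atTop] fun n : ℕ => (n : ℝ) ^ (-((N : ℝ) - 2))) ∧
    ((fun n : ℕ => ω * (∫ r in Set.Ioi (0 : ℝ), r ^ (N - 1) * (Θ N n r) ^ p)
        - S ^ ((N : ℝ) / 2)) =O[atTop] fun n : ℕ => (n : ℝ) ^ (-(N : ℝ))) :=
  stmt17_general N hN p hp ω S hid1 hid2
end
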